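/- arXiv:2508.20413 — 2 statements merged into one kernel-verified Lean document; each statement's English description precedes it below -/
import Mathlib

section
/- The variance of the Rademacher Hutchinson estimator for a symmetric matrix A is Var(vᵀAv) = 2 Σ_{i≠j} A_{ij}², which is minimal among all estimators of the form vᵀAv with v having i.i.d. mean-zero, unit-variance entries. -/
open MeasureTheory ProbabilityTheory

/-- The variance of the Rademacher Hutchinson estimator for a
symmetric matrix `A` is `Var(vᵀAv) = 2 Σ_{i≠j} A_{ij}²`. -/
theorem hutchinson_rademacher_variance
    {Ω : Type*} [MeasurableSpace Ω] (μ : Measure Ω) [IsProbabilityMeasure μ]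
    (n : ℕ) (A : Matrix (Fin n) (Fin n) ℝ) (hA : A.IsSymm)
    (v : Fin n → Ω → ℝ) (hmeas : ∀ i, Measurable (v i))
    (hindep : iIndepFun v μ)
    (hlaw : ∀ i, μ.map (v i) =
      (1 / 2 : ENNReal) • Measure.dirac (1 : ℝ) +
      (1 / 2 : ENNReal) • Measure.dirac (-1 : ℝ)) :
    variance (fun ω => ∑ i : Fin n, ∑ j : Fin n, v i ω * A i j * v j ω) μ =
      2 * ∑ i : Fin n, ∑ j : Fin n, if i ≠ j then (A i j) ^ 2 else 0 := by
  classical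
  -- a.e. each entry squares to 1
  have hae : ∀ i, ∀ᵐ ω ∂μ, (v i ω) ^ 2 = 1 := by
    intro i
    have hmap : ∀ᵐ x ∂(μ.map (v i)), x ^ 2 = 1 := by
      rw [hlaw i, ae_add_measure_iff]
      constructor <;> refine Measure.ae_smul_measure ?_ _ <;>
        · rw [ae_dirac_iff (show MeasurableSet {x : ℝ | x ^ 2 = 1} from
            measurableSet_eq_fun (by fun_prop) measurable_const)]
          norm_num
    rw [ae_map_iff (hmeas i).aemeasurable
      (measurableSet_eq_fun (by fun_prop) measurable_const)] at hmap
    exact hmap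
  -- first moment is 0
  have hE1 : ∀ i, ∫ ω, v i ω ∂μ = 0 := by
    intro i
    have h : ∫ ω, v i ω ∂μ = ∫ x, x ∂(μ.map (v i)) :=
      (integral_map (hmeas i).aemeasurable aestronglyMeasurable_id).symm
    rw [h, hlaw i]
    have hdi : ∀ a : ℝ, Integrable (fun x : ℝ => x) ((1/2 : ENNReal) • Measure.dirac a) := by
      intro a
      refine Integrable.smul_measure ?_ (by norm_num)
      refine (integrable_const a).congr ?_
      rw [Filter.EventuallyEq, ae_dirac_iff (show MeasurableSet {x : ℝ | a = x} from
        measurableSet_eq_fun measurable_const measurable_id)]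
    rw [integral_add_measure (hdi 1) (hdi (-1)), integral_smul_measure, integral_smul_measure,
      integral_dirac, integral_dirac]
    norm_num
  -- a.e. bound
  have habs : ∀ i, ∀ᵐ ω ∂μ, ‖v i ω‖ ≤ 1 := by
    intro i
    filter_upwards [hae i] with ω h
    rw [Real.norm_eq_abs]
    nlinarith [abs_nonneg (v i ω), sq_abs (v i ω)]
  -- integrability of products
  have hint1 : ∀ i, Integrable (v i) μ := fun i =>
    Integrable.mono' (integrable_const 1) (hmeas i).aestronglyMeasurable (habs i)
  have hint2 : ∀ i j, Integrable (fun ω => v i ω * v j ω) μ := by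
    intro i j
    refine Integrable.mono' (integrable_const 1)
      ((hmeas i).mul (hmeas j)).aestronglyMeasurable ?_
    filter_upwards [habs i, habs j] with ω h1 h2
    rw [Real.norm_eq_abs] at h1 h2
    rw [Real.norm_eq_abs, abs_mul]
    nlinarith [abs_nonneg (v i ω), abs_nonneg (v j ω)]
  have hint4 : ∀ i j k l, Integrable (fun ω => v i ω * v j ω * v k ω * v l ω) μ := by
    intro i j k l
    refine Integrable.mono' (integrable_const 1)
      ((((hmeas i).mul (hmeas j)).mul (hmeas k)).mul (hmeas l)).aestronglyMeasurable ?_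
    filter_upwards [habs i, habs j, habs k, habs l] with ω h1 h2 h3 h4
    rw [Real.norm_eq_abs] at h1 h2 h3 h4
    rw [Real.norm_eq_abs, abs_mul, abs_mul, abs_mul]
    nlinarith [abs_nonneg (v i ω), abs_nonneg (v j ω), abs_nonneg (v k ω), abs_nonneg (v l ω),
      mul_le_one₀ h1 (abs_nonneg (v j ω)) h2, mul_le_one₀ h3 (abs_nonneg (v l ω)) h4,
      mul_nonneg (abs_nonneg (v i ω)) (abs_nonneg (v j ω)),
      mul_nonneg (abs_nonneg (v k ω)) (abs_nonneg (v l ω))]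
  -- second moments / pair expectations
  have hpair : ∀ i j, ∫ ω, v i ω * v j ω ∂μ = if i = j then 1 else 0 := by
    intro i j
    by_cases h : i = j
    · subst h
      have he : (fun ω => v i ω * v i ω) =ᵐ[μ] fun _ => (1 : ℝ) := by
        filter_upwards [hae i] with ω hω
        linear_combination hω
      rw [integral_congr_ae he]
      simp
    · have hind : IndepFun (v i) (v j) μ := hindep.indepFun h
      have hmul : (fun ω => v i ω * v j ω) = v i * v j := rfl
      rw [hmul, hind.integral_mul_eq_mul_integral (hmeas i).aestronglyMeasurable (hmeas j).aestronglyMeasurable,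
        hE1 i, hE1 j]
      simp [h]
  -- fourth moments
  have hone : ∫ (_ : Ω), (1:ℝ) ∂μ = 1 := by simp
  have hquad : ∀ i j k l, ∫ ω, v i ω * v j ω * v k ω * v l ω ∂μ =
      (if i = j then (1:ℝ) else 0) * (if k = l then 1 else 0)
      + (if i = k then 1 else 0) * (if j = l then 1 else 0)
      + (if i = l then 1 else 0) * (if j = k then 1 else 0)
      - 2 * (if i = j ∧ j = k ∧ k = l then 1 else 0) := by
    intro i j k l
    by_cases hij : i = j
    · subst hij
      by_cases hkl : k = l
      · subst hkl
        have he : (fun ω => v i ω * v i ω * v k ω * v k ω) =ᵐ[μ] fun _ => (1 : ℝ) := by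
          filter_upwards [hae i, hae k] with ω h1 h2
          linear_combination (v k ω) ^ 2 * h1 + h2
        rw [integral_congr_ae he, hone]
        by_cases hik : i = k <;> simp [hik] <;> norm_num
      · have he : (fun ω => v i ω * v i ω * v k ω * v l ω) =ᵐ[μ] fun ω => v k ω * v l ω := by
          filter_upwards [hae i] with ω h1
          linear_combination (v k ω * v l ω) * h1
        rw [integral_congr_ae he, hpair]
        by_cases hik : i = k
        · subst hik
          have h' : ¬ i = l := fun h => hkl h
          simp [hkl, h']
        · by_cases hil : i = l
          · have hlk : ¬ l = k := fun h => hik (by rw [hil]; exact h)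
            simp [hkl, hik, hil, hlk]
          · simp [hkl, hik, hil]
    · by_cases hkl : k = l
      · subst hkl
        have he : (fun ω => v i ω * v j ω * v k ω * v k ω) =ᵐ[μ] fun ω => v i ω * v j ω := by
          filter_upwards [hae k] with ω h1
          linear_combination (v i ω * v j ω) * h1
        rw [integral_congr_ae he, hpair]
        by_cases hik : i = k
        · subst hik
          have h' : ¬ j = i := fun h => hij h.symm
          simp [hij, h']
        · by_cases hjk : j = k <;> simp [hij, hik, hjk]
      · by_cases hik : i = k
        · subst hik
          by_cases hjl : j = l
          · subst hjl
            have he : (fun ω => v i ω * v j ω * v i ω * v j ω) =ᵐ[μ] fun _ => (1 : ℝ) := by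
              filter_upwards [hae i, hae j] with ω h1 h2
              linear_combination (v j ω) ^ 2 * h1 + h2
            rw [integral_congr_ae he, hone]
            have h2 : ¬ (i = j ∧ j = i ∧ i = j) := fun h => hij h.1
            have hji : ¬ j = i := fun h => hij h.symm
            simp [hij, hji, h2]
          · have he : (fun ω => v i ω * v j ω * v i ω * v l ω) =ᵐ[μ] fun ω => v j ω * v l ω := by
              filter_upwards [hae i] with ω h1
              linear_combination (v j ω * v l ω) * h1
            rw [integral_congr_ae he, hpair]
            have h2 : ¬ (i = j ∧ j = i ∧ i = l) := fun h => hij h.1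
            by_cases hil : i = l
            · have hji : ¬ j = i := fun h => hij h.symm
              have hlj : ¬ l = j := fun h => hjl h.symm
              simp [hij, hjl, hil, hji, hlj, h2]
            · simp [hij, hjl, hil, h2]
        · by_cases hil : i = l
          · subst hil
            by_cases hjk : j = k
            · subst hjk
              have he : (fun ω => v i ω * v j ω * v j ω * v i ω) =ᵐ[μ] fun _ => (1 : ℝ) := by
                filter_upwards [hae i, hae j] with ω h1 h2
                linear_combination (v j ω) ^ 2 * h1 + h2
              rw [integral_congr_ae he, hone]
              have h2 : ¬ (i = j ∧ j = j ∧ j = i) := fun h => hij h.1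
              have hji : ¬ j = i := fun h => hij h.symm
              simp [hij, hik, h2, hji]
            · have he : (fun ω => v i ω * v j ω * v k ω * v i ω) =ᵐ[μ] fun ω => v j ω * v k ω := by
                filter_upwards [hae i] with ω h1
                linear_combination (v j ω * v k ω) * h1
              rw [integral_congr_ae he, hpair]
              have h2 : ¬ (i = j ∧ j = k ∧ k = i) := fun h => hij h.1
              simp [hij, hik, hjk, h2]
          · by_cases hjk : j = k
            · subst hjk
              have he : (fun ω => v i ω * v j ω * v j ω * v l ω) =ᵐ[μ] fun ω => v i ω * v l ω := by
                filter_upwards [hae j] with ω h1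
                linear_combination (v i ω * v l ω) * h1
              rw [integral_congr_ae he, hpair]
              have h2 : ¬ (i = j ∧ j = j ∧ j = l) := fun h => hij h.1
              by_cases hjl : j = l <;> simp [hij, hik, hil, hjl, h2]
            · by_cases hjl : j = l
              · subst hjl
                have he : (fun ω => v i ω * v j ω * v k ω * v j ω) =ᵐ[μ] fun ω => v i ω * v k ω := by
                  filter_upwards [hae j] with ω h1
                  linear_combination (v i ω * v k ω) * h1
                rw [integral_congr_ae he, hpair]
                have h2 : ¬ (i = j ∧ j = k ∧ k = j) := fun h => hij h.1
                simp [hij, hik, hil, hjk, h2]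
              · -- all indices distinct
                have hnot : i ∉ ({j, k, l} : Finset (Fin n)) := by
                  simp [hij, hik, hil]
                have hind : IndepFun (∏ a ∈ ({j, k, l} : Finset (Fin n)), v a) (v i) μ :=
                  hindep.indepFun_finsetProd_of_notMem hmeas hnot
                have hprodeq : (∏ a ∈ ({j, k, l} : Finset (Fin n)), v a) =
                    fun ω => v j ω * (v k ω * v l ω) := by
                  funext ω
                  rw [Finset.prod_apply]
                  rw [Finset.prod_insert (by simp [hjk, hjl]),
                    Finset.prod_insert (by simp [hkl]), Finset.prod_singleton]
                have he : (fun ω => v i ω * v j ω * v k ω * v l ω) =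
                    (∏ a ∈ ({j, k, l} : Finset (Fin n)), v a) * v i := by
                  funext ω
                  rw [Pi.mul_apply, hprodeq]
                  ring
                rw [he, hind.integral_mul_eq_mul_integral (by
                    rw [hprodeq]
                    exact ((hmeas j).mul ((hmeas k).mul (hmeas l))).aestronglyMeasurable)
                  (hmeas i).aestronglyMeasurable, hE1 i]
                have h2 : ¬ (i = j ∧ j = k ∧ k = l) := fun h => hij h.1
                simp [hij, hik, hil, hjk, hjl, hkl, h2]
  -- now the main computation
  set X : Ω → ℝ := fun ω => ∑ i : Fin n, ∑ j : Fin n, v i ω * A i j * v j ω with hX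
  have hterm1 : ∀ i j, ∫ ω, v i ω * A i j * v j ω ∂μ = if i = j then A i j else 0 := by
    intro i j
    have h : (fun ω => v i ω * A i j * v j ω) = fun ω => A i j * (v i ω * v j ω) := by
      funext ω; ring
    rw [h, integral_const_mul, hpair]
    by_cases h' : i = j <;> simp [h']
  have hint1' : ∀ i j, Integrable (fun ω => v i ω * A i j * v j ω) μ := by
    intro i j
    have h : (fun ω => v i ω * A i j * v j ω) = fun ω => A i j * (v i ω * v j ω) := by
      funext ω; ring
    rw [h]
    exact (hint2 i j).const_mul _
  have hEX : ∫ ω, X ω ∂μ = ∑ i, A i i := by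
    rw [hX]
    rw [integral_finset_sum _ (fun i _ => integrable_finset_sum _ (fun j _ => hint1' i j))]
    have : ∀ i : Fin n, i ∈ Finset.univ → (∫ ω, ∑ j, v i ω * A i j * v j ω ∂μ) =
        ∑ j, if i = j then A i j else 0 := by
      intro i _
      rw [integral_finset_sum _ (fun j _ => hint1' i j)]
      exact Finset.sum_congr rfl fun j _ => hterm1 i j
    rw [Finset.sum_congr rfl this]
    simp
  -- X is Memℒp 2
  have hXmeas : Measurable X := by
    apply Finset.measurable_sum
    intro i _
    apply Finset.measurable_sum
    intro j _
    exact ((hmeas i).mul_const _).mul (hmeas j)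
  have hXmem : MemLp X 2 μ := by
    refine MemLp.of_bound hXmeas.aestronglyMeasurable (∑ i, ∑ j, |A i j|) ?_
    have hall : ∀ᵐ ω ∂μ, ∀ i, ‖v i ω‖ ≤ 1 := ae_all_iff.2 habs
    filter_upwards [hall] with ω h
    calc ‖X ω‖ ≤ ∑ i, ‖∑ j, v i ω * A i j * v j ω‖ := norm_sum_le _ _
      _ ≤ ∑ i, ∑ j, ‖v i ω * A i j * v j ω‖ :=
          Finset.sum_le_sum fun i _ => norm_sum_le _ _
      _ ≤ ∑ i, ∑ j, |A i j| := by
          refine Finset.sum_le_sum fun i _ => Finset.sum_le_sum fun j _ => ?_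
          rw [norm_mul, norm_mul]
          have hi := h i
          have hj := h j
          rw [Real.norm_eq_abs (v i ω)] at hi
          rw [Real.norm_eq_abs (v j ω)] at hj
          rw [Real.norm_eq_abs (v i ω), Real.norm_eq_abs (v j ω), Real.norm_eq_abs (A i j)]
          calc |v i ω| * |A i j| * |v j ω| ≤ 1 * |A i j| * 1 := by
                refine mul_le_mul (mul_le_mul hi le_rfl (abs_nonneg _) zero_le_one) hj
                  (abs_nonneg _) ?_
                positivity
            _ = |A i j| := by ring
  -- integrability of squared terms
  have hint4' : ∀ i j k l, Integrable
      (fun ω => (v i ω * A i j * v j ω) * (v k ω * A k l * v l ω)) μ := by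
    intro i j k l
    have h : (fun ω => (v i ω * A i j * v j ω) * (v k ω * A k l * v l ω)) =
        fun ω => (A i j * A k l) * (v i ω * v j ω * v k ω * v l ω) := by
      funext ω; ring
    rw [h]
    exact (hint4 i j k l).const_mul _
  have hterm4 : ∀ i j k l, ∫ ω, (v i ω * A i j * v j ω) * (v k ω * A k l * v l ω) ∂μ =
      A i j * A k l * ((if i = j then (1:ℝ) else 0) * (if k = l then 1 else 0)
      + (if i = k then 1 else 0) * (if j = l then 1 else 0)
      + (if i = l then 1 else 0) * (if j = k then 1 else 0)
      - 2 * (if i = j ∧ j = k ∧ k = l then 1 else 0)) := by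
    intro i j k l
    have h : (fun ω => (v i ω * A i j * v j ω) * (v k ω * A k l * v l ω)) =
        fun ω => (A i j * A k l) * (v i ω * v j ω * v k ω * v l ω) := by
      funext ω; ring
    rw [h, integral_const_mul, hquad]
  -- expectation of X²
  have hEX2 : ∫ ω, (X ω) ^ 2 ∂μ = ∑ i, ∑ j, ∑ k, ∑ l,
      A i j * A k l * ((if i = j then (1:ℝ) else 0) * (if k = l then 1 else 0)
      + (if i = k then 1 else 0) * (if j = l then 1 else 0)
      + (if i = l then 1 else 0) * (if j = k then 1 else 0)
      - 2 * (if i = j ∧ j = k ∧ k = l then 1 else 0)) := by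
    have hsq : ∀ ω, (X ω) ^ 2 = ∑ i, ∑ j, ∑ k, ∑ l,
        (v i ω * A i j * v j ω) * (v k ω * A k l * v l ω) := by
      intro ω
      rw [hX, pow_two, Finset.sum_mul_sum]
      refine Finset.sum_congr rfl fun i _ => ?_
      rw [← Finset.sum_comm]
      refine Finset.sum_congr rfl fun k _ => ?_
      rw [Finset.sum_mul_sum]
    simp only [hsq]
    rw [integral_finset_sum _ (fun i _ => integrable_finset_sum _ (fun j _ =>
      integrable_finset_sum _ (fun k _ => integrable_finset_sum _ (fun l _ => hint4' i j k l))))]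
    refine Finset.sum_congr rfl fun i _ => ?_
    rw [integral_finset_sum _ (fun j _ =>
      integrable_finset_sum _ (fun k _ => integrable_finset_sum _ (fun l _ => hint4' i j k l)))]
    refine Finset.sum_congr rfl fun j _ => ?_
    rw [integral_finset_sum _ (fun k _ => integrable_finset_sum _ (fun l _ => hint4' i j k l))]
    refine Finset.sum_congr rfl fun k _ => ?_
    rw [integral_finset_sum _ (fun l _ => hint4' i j k l)]
    exact Finset.sum_congr rfl fun l _ => hterm4 i j k l
  -- variance
  rw [variance_eq_sub hXmem]
  have hXpow : (∫ ω, (X ^ 2) ω ∂μ) = ∫ ω, (X ω) ^ 2 ∂μ := by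
    simp [Pi.pow_apply]
  rw [show μ[X ^ 2] = ∫ ω, (X ^ 2) ω ∂μ from rfl, hXpow, hEX2,
    show μ[X] = ∫ ω, X ω ∂μ from rfl, hEX]
  -- pure algebra now
  have hcollapse : ∀ (f : Fin n → ℝ) (b : Fin n), ∑ x, (if b = x then f x else 0) = f b := by
    intro f b; simp
  have h1 : ∑ i, ∑ j, ∑ k, ∑ l, A i j * A k l *
      ((if i = j then (1:ℝ) else 0) * (if k = l then 1 else 0)) = (∑ i, A i i) ^ 2 := by
    have e1 : ∀ i j, ∑ k, ∑ l, A i j * A k l *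
        ((if i = j then (1:ℝ) else 0) * (if k = l then 1 else 0)) =
        (if i = j then A i j * ∑ m, A m m else 0) := by
      intro i j
      by_cases hij : i = j
      · simp only [if_pos hij]
        rw [Finset.mul_sum]
        refine Finset.sum_congr rfl fun k _ => ?_
        rw [← hcollapse (fun l => A i j * A k l) k]
        refine Finset.sum_congr rfl fun l _ => ?_
        by_cases hkl : k = l <;> simp [hkl]
      · simp only [if_neg hij]
        refine Finset.sum_eq_zero fun k _ => Finset.sum_eq_zero fun l _ => ?_
        ring
    calc ∑ i, ∑ j, ∑ k, ∑ l, A i j * A k l *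
        ((if i = j then (1:ℝ) else 0) * (if k = l then 1 else 0))
        = ∑ i, ∑ j, (if i = j then A i j * ∑ m, A m m else 0) :=
          Finset.sum_congr rfl fun i _ => Finset.sum_congr rfl fun j _ => e1 i j
      _ = ∑ i, A i i * ∑ m, A m m :=
          Finset.sum_congr rfl fun i _ => hcollapse (fun j => A i j * ∑ m, A m m) i
      _ = (∑ i, A i i) ^ 2 := by rw [pow_two, ← Finset.sum_mul]
  have h2 : ∑ i, ∑ j, ∑ k, ∑ l, A i j * A k l *
      ((if i = k then (1:ℝ) else 0) * (if j = l then 1 else 0)) = ∑ i, ∑ j, A i j ^ 2 := by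
    refine Finset.sum_congr rfl fun i _ => Finset.sum_congr rfl fun j _ => ?_
    have e2 : ∀ k, ∑ l, A i j * A k l *
        ((if i = k then (1:ℝ) else 0) * (if j = l then 1 else 0)) =
        if i = k then A i j * A k j else 0 := by
      intro k
      by_cases hik : i = k
      · simp only [if_pos hik]
        rw [← hcollapse (fun l => A i j * A k l) j]
        refine Finset.sum_congr rfl fun l _ => ?_
        by_cases hjl : j = l <;> simp [hjl]
      · simp only [if_neg hik]
        exact Finset.sum_eq_zero fun l _ => by ring
    rw [Finset.sum_congr rfl (fun k _ => e2 k), hcollapse (fun k => A i j * A k j) i, pow_two]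
  have h3 : ∑ i, ∑ j, ∑ k, ∑ l, A i j * A k l *
      ((if i = l then (1:ℝ) else 0) * (if j = k then 1 else 0)) = ∑ i, ∑ j, A i j ^ 2 := by
    refine Finset.sum_congr rfl fun i _ => Finset.sum_congr rfl fun j _ => ?_
    have e3 : ∀ k, ∑ l, A i j * A k l *
        ((if i = l then (1:ℝ) else 0) * (if j = k then 1 else 0)) =
        if j = k then A i j * A k i else 0 := by
      intro k
      by_cases hjk : j = k
      · simp only [if_pos hjk]
        rw [← hcollapse (fun l => A i j * A k l) i]
        refine Finset.sum_congr rfl fun l _ => ?_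
        by_cases hil : i = l <;> simp [hil]
      · simp only [if_neg hjk]
        exact Finset.sum_eq_zero fun l _ => by ring
    rw [Finset.sum_congr rfl (fun k _ => e3 k), hcollapse (fun k => A i j * A k i) j,
      hA.apply, pow_two]
  have h4 : ∑ i, ∑ j, ∑ k, ∑ l, A i j * A k l *
      (2 * (if i = j ∧ j = k ∧ k = l then (1:ℝ) else 0)) = 2 * ∑ i, A i i ^ 2 := by
    have e4 : ∀ i j, ∑ k, ∑ l, A i j * A k l *
        (2 * (if i = j ∧ j = k ∧ k = l then (1:ℝ) else 0)) =
        if i = j then 2 * (A i j * A j j) else 0 := by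
      intro i j
      by_cases hij : i = j
      · simp only [if_pos hij]
        have e4' : ∀ k, ∑ l, A i j * A k l *
            (2 * (if i = j ∧ j = k ∧ k = l then (1:ℝ) else 0)) =
            if j = k then 2 * (A i j * A k k) else 0 := by
          intro k
          by_cases hjk : j = k
          · simp only [if_pos hjk]
            rw [← hcollapse (fun l => 2 * (A i j * A k l)) k]
            refine Finset.sum_congr rfl fun l _ => ?_
            by_cases hkl : k = l
            · have hc : (i = j ∧ j = k ∧ k = l) := ⟨hij, hjk, hkl⟩
              simp only [if_pos hc, if_pos hkl]
              ring
            · have hc : ¬ (i = j ∧ j = k ∧ k = l) := fun h => hkl h.2.2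
              simp only [if_neg hc, if_neg hkl]
              ring
          · have hc : ∀ l, ¬ (i = j ∧ j = k ∧ k = l) := fun l h => hjk h.2.1
            simp only [if_neg hjk]
            refine Finset.sum_eq_zero fun l _ => ?_
            simp only [if_neg (hc l)]
            ring
        rw [Finset.sum_congr rfl (fun k _ => e4' k), hcollapse (fun k => 2 * (A i j * A k k)) j]
      · simp only [if_neg hij]
        refine Finset.sum_eq_zero fun k _ => Finset.sum_eq_zero fun l _ => ?_
        have hc : ¬ (i = j ∧ j = k ∧ k = l) := fun h => hij h.1
        simp only [if_neg hc]
        ring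
    calc ∑ i, ∑ j, ∑ k, ∑ l, A i j * A k l *
        (2 * (if i = j ∧ j = k ∧ k = l then (1:ℝ) else 0))
        = ∑ i, ∑ j, (if i = j then 2 * (A i j * A j j) else 0) :=
          Finset.sum_congr rfl fun i _ => Finset.sum_congr rfl fun j _ => e4 i j
      _ = ∑ i, 2 * (A i i * A i i) :=
          Finset.sum_congr rfl fun i _ => hcollapse (fun j => 2 * (A i j * A j j)) i
      _ = 2 * ∑ i, A i i ^ 2 := by
          rw [Finset.mul_sum]
          exact Finset.sum_congr rfl fun i _ => by ring
  have hexp : ∑ i, ∑ j, ∑ k, ∑ l, A i j * A k l *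
      ((if i = j then (1:ℝ) else 0) * (if k = l then 1 else 0)
      + (if i = k then 1 else 0) * (if j = l then 1 else 0)
      + (if i = l then 1 else 0) * (if j = k then 1 else 0)
      - 2 * (if i = j ∧ j = k ∧ k = l then 1 else 0)) =
      (∑ i, A i i) ^ 2 + (∑ i, ∑ j, A i j ^ 2) + (∑ i, ∑ j, A i j ^ 2)
        - 2 * ∑ i, A i i ^ 2 := by
    have hLHS : ∑ i, ∑ j, ∑ k, ∑ l, A i j * A k l *
        ((if i = j then (1:ℝ) else 0) * (if k = l then 1 else 0)
        + (if i = k then 1 else 0) * (if j = l then 1 else 0)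
        + (if i = l then 1 else 0) * (if j = k then 1 else 0)
        - 2 * (if i = j ∧ j = k ∧ k = l then 1 else 0)) =
        (∑ i, ∑ j, ∑ k, ∑ l, A i j * A k l *
          ((if i = j then (1:ℝ) else 0) * (if k = l then 1 else 0)))
        + (∑ i, ∑ j, ∑ k, ∑ l, A i j * A k l *
          ((if i = k then (1:ℝ) else 0) * (if j = l then 1 else 0)))
        + (∑ i, ∑ j, ∑ k, ∑ l, A i j * A k l *
          ((if i = l then (1:ℝ) else 0) * (if j = k then 1 else 0)))
        - (∑ i, ∑ j, ∑ k, ∑ l, A i j * A k l *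
          (2 * (if i = j ∧ j = k ∧ k = l then (1:ℝ) else 0))) := by
      simp only [← Finset.sum_sub_distrib, ← Finset.sum_add_distrib]
      refine Finset.sum_congr rfl fun i _ => Finset.sum_congr rfl fun j _ =>
        Finset.sum_congr rfl fun k _ => Finset.sum_congr rfl fun l _ => by ring
    rw [hLHS, h1, h2, h3, h4]
  rw [hexp]
  have hsplit : ∑ i, ∑ j, A i j ^ 2 =
      (∑ i : Fin n, ∑ j : Fin n, if i ≠ j then (A i j) ^ 2 else 0) + ∑ i, A i i ^ 2 := by
    calc ∑ i, ∑ j, A i j ^ 2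
        = ∑ i, ∑ j, ((if i ≠ j then A i j ^ 2 else 0) + (if i = j then A i j ^ 2 else 0)) := by
          refine Finset.sum_congr rfl fun i _ => Finset.sum_congr rfl fun j _ => ?_
          by_cases h : i = j <;> simp [h]
      _ = ∑ i, ((∑ j, if i ≠ j then A i j ^ 2 else 0) + ∑ j, if i = j then A i j ^ 2 else 0) :=
          Finset.sum_congr rfl fun i _ => Finset.sum_add_distrib
      _ = (∑ i, ∑ j, if i ≠ j then A i j ^ 2 else 0)
            + ∑ i, ∑ j, (if i = j then A i j ^ 2 else 0) := Finset.sum_add_distrib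
      _ = (∑ i, ∑ j, if i ≠ j then A i j ^ 2 else 0) + ∑ i, A i i ^ 2 := by
          refine congrArg _ (Finset.sum_congr rfl fun i _ => hcollapse (fun j => A i j ^ 2) i)
  rw [hsplit]
  ring
end

section
/- Under a conformal change of metric g ↦ e^{2f} g on a 2-dimensional Riemannian manifold, the scalar curvature transforms as S(e^{2f} g) = e^{−2f} (S(g) − 2 Δ^g f), where Δ^g is the Laplace–Beltrami operator of g. -/
noncomputable section

/-- First partial derivative of a function on `ℝ²`. -/
def pd1 (f : ℝ × ℝ → ℝ) (x : ℝ × ℝ) : ℝ := fderiv ℝ f x (1, 0)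

/-- Second partial derivative of a function on `ℝ²`. -/
def pd2 (f : ℝ × ℝ → ℝ) (x : ℝ × ℝ) : ℝ := fderiv ℝ f x (0, 1)

/-- Gaussian curvature of the Riemannian metric `E du² + 2F du dv + G dv²` on `ℝ²`,
given by the Brioschi formula. -/
def brioschiGaussCurv (E F G : ℝ × ℝ → ℝ) (x : ℝ × ℝ) : ℝ :=
  (Matrix.det !![-(1/2) * pd2 (pd2 E) x + pd1 (pd2 F) x - (1/2) * pd1 (pd1 G) x,
                   (1/2) * pd1 E x, pd1 F x - (1/2) * pd2 E x;
                 pd2 F x - (1/2) * pd1 G x, E x, F x;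
                 (1/2) * pd2 G x, F x, G x] -
    Matrix.det !![0, (1/2) * pd2 E x, (1/2) * pd1 G x;
                  (1/2) * pd2 E x, E x, F x;
                  (1/2) * pd1 G x, F x, G x]) / (E x * G x - F x ^ 2) ^ 2

/-- Scalar curvature of a 2-dimensional Riemannian metric: twice the Gaussian
curvature. -/
def scalarCurv (E F G : ℝ × ℝ → ℝ) (x : ℝ × ℝ) : ℝ := 2 * brioschiGaussCurv E F G x

/-- Laplace–Beltrami operator of the metric `E du² + 2F du dv + G dv²` applied to `f`. -/
def laplaceBeltrami (E F G : ℝ × ℝ → ℝ) (f : ℝ × ℝ → ℝ) (x : ℝ × ℝ) : ℝ :=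
  (1 / Real.sqrt (E x * G x - F x ^ 2)) *
    (pd1 (fun y => (G y * pd1 f y - F y * pd2 f y) / Real.sqrt (E y * G y - F y ^ 2)) x +
     pd2 (fun y => (E y * pd2 f y - F y * pd1 f y) / Real.sqrt (E y * G y - F y ^ 2)) x)

private lemma diff_pd {f : ℝ × ℝ → ℝ} (hf : ContDiff ℝ (⊤ : ℕ∞) f) (w : ℝ × ℝ) :
    Differentiable ℝ (fun y => fderiv ℝ f y w) :=
  ((hf.fderiv_right (m := 1) (WithTop.coe_le_coe.2 le_top)).clm_apply contDiff_const).differentiable one_ne_zero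

private lemma fd_symm {f : ℝ × ℝ → ℝ} (hf : ContDiff ℝ (⊤ : ℕ∞) f) (x v w : ℝ × ℝ) :
    fderiv ℝ (fun y => fderiv ℝ f y v) x w = fderiv ℝ (fun y => fderiv ℝ f y w) x v := by
  have hd : ∀ y, HasFDerivAt f (fderiv ℝ f y) y := fun y =>
    (hf.differentiable (by simp) y).hasFDerivAt
  have h2 : HasFDerivAt (fderiv ℝ f) (fderiv ℝ (fderiv ℝ f) x) x :=
    ((hf.fderiv_right (m := 1) (WithTop.coe_le_coe.2 le_top)).differentiable one_ne_zero x).hasFDerivAt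
  have key := second_derivative_symmetric hd h2 w v
  have e1 : ∀ a : ℝ × ℝ, ∀ b : ℝ × ℝ,
      fderiv ℝ (fun y => fderiv ℝ f y a) x b = fderiv ℝ (fderiv ℝ f) x b a := by
    intro a b
    rw [fderiv_clm_apply ((hf.fderiv_right (m := 1) (WithTop.coe_le_coe.2 le_top)).differentiable one_ne_zero x)
      (differentiableAt_const a)]
    simp
  rw [e1, e1]
  exact key

private lemma pd1_eq (f : ℝ × ℝ → ℝ) : pd1 f = fun y => fderiv ℝ f y (1, 0) := rfl
private lemma pd2_eq (f : ℝ × ℝ → ℝ) : pd2 f = fun y => fderiv ℝ f y (0, 1) := rfl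

private lemma fd_mulsub {A B f : ℝ × ℝ → ℝ} (hA : ContDiff ℝ (⊤ : ℕ∞) A) (hB : ContDiff ℝ (⊤ : ℕ∞) B)
    (hf : ContDiff ℝ (⊤ : ℕ∞) f) (x a b w : ℝ × ℝ) :
    fderiv ℝ (fun y => A y * fderiv ℝ f y a - B y * fderiv ℝ f y b) x w =
      fderiv ℝ A x w * fderiv ℝ f x a + A x * fderiv ℝ (fun y => fderiv ℝ f y a) x w
      - (fderiv ℝ B x w * fderiv ℝ f x b + B x * fderiv ℝ (fun y => fderiv ℝ f y b) x w) := by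
  have h := ((hA.differentiable (by simp) x).hasFDerivAt.mul ((diff_pd hf a) x).hasFDerivAt).sub
    ((hB.differentiable (by simp) x).hasFDerivAt.mul ((diff_pd hf b) x).hasFDerivAt)
  erw [h.fderiv]
  simp only [ContinuousLinearMap.sub_apply, ContinuousLinearMap.add_apply,
    ContinuousLinearMap.coe_smul', Pi.smul_apply, smul_eq_mul]
  ring

private lemma fd_det {E F G : ℝ × ℝ → ℝ} (hE : ContDiff ℝ (⊤ : ℕ∞) E) (hF : ContDiff ℝ (⊤ : ℕ∞) F)
    (hG : ContDiff ℝ (⊤ : ℕ∞) G) (x w : ℝ × ℝ) :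
    fderiv ℝ (fun y => E y * G y - F y ^ 2) x w =
      fderiv ℝ E x w * G x + E x * fderiv ℝ G x w - 2 * F x * fderiv ℝ F x w := by
  have hFx := (hF.differentiable (by simp) x).hasFDerivAt
  have hpow : HasFDerivAt (fun y => F y ^ 2) ((((2 : ℕ) : ℝ) * F x ^ (2 - 1)) • fderiv ℝ F x) x :=
    (hasDerivAt_pow 2 (F x)).comp_hasFDerivAt x hFx
  have h := ((hE.differentiable (by simp) x).hasFDerivAt.mul
    (hG.differentiable (by simp) x).hasFDerivAt).sub hpow
  erw [h.fderiv]
  simp only [ContinuousLinearMap.sub_apply, ContinuousLinearMap.add_apply,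
    ContinuousLinearMap.coe_smul', Pi.smul_apply, smul_eq_mul]
  push_cast
  ring

private lemma lap_eval {E F G f : ℝ × ℝ → ℝ}
    (hE : ContDiff ℝ (⊤ : ℕ∞) E) (hF : ContDiff ℝ (⊤ : ℕ∞) F) (hG : ContDiff ℝ (⊤ : ℕ∞) G) (hf : ContDiff ℝ (⊤ : ℕ∞) f)
    (hdet : ∀ y, 0 < E y * G y - F y ^ 2) (x : ℝ × ℝ) :
    laplaceBeltrami E F G f x =
      ((pd1 G x * pd1 f x + G x * pd1 (pd1 f) x - (pd1 F x * pd2 f x + F x * pd1 (pd2 f) x))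
        + (pd2 E x * pd2 f x + E x * pd2 (pd2 f) x - (pd2 F x * pd1 f x + F x * pd1 (pd2 f) x)))
        / (E x * G x - F x ^ 2)
      - ((G x * pd1 f x - F x * pd2 f x) * (pd1 E x * G x + E x * pd1 G x - 2 * F x * pd1 F x)
         + (E x * pd2 f x - F x * pd1 f x) * (pd2 E x * G x + E x * pd2 G x - 2 * F x * pd2 F x))
        / (2 * (E x * G x - F x ^ 2) ^ 2) := by
  have hEx := (hE.differentiable (by simp) x).hasFDerivAt
  have hFx := (hF.differentiable (by simp) x).hasFDerivAt
  have hGx := (hG.differentiable (by simp) x).hasFDerivAt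
  have hspos : 0 < Real.sqrt (E x * G x - F x ^ 2) := Real.sqrt_pos.2 (hdet x)
  have hD : DifferentiableAt ℝ (fun y => E y * G y - F y ^ 2) x :=
    ((hE.differentiable (by simp) x).mul (hG.differentiable (by simp) x)).sub
      ((hF.differentiable (by simp) x).pow 2)
  have hsq : HasFDerivAt (fun y => Real.sqrt (E y * G y - F y ^ 2))
      ((1 / (2 * Real.sqrt (E x * G x - F x ^ 2))) • fderiv ℝ (fun y => E y * G y - F y ^ 2) x)
      x := hD.hasFDerivAt.sqrt (hdet x).ne'
  have hsqinv : HasFDerivAt (fun y => (Real.sqrt (E y * G y - F y ^ 2))⁻¹)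
      ((-(Real.sqrt (E x * G x - F x ^ 2) ^ 2)⁻¹) •
        ((1 / (2 * Real.sqrt (E x * G x - F x ^ 2))) •
          fderiv ℝ (fun y => E y * G y - F y ^ 2) x)) x :=
    (hasDerivAt_inv hspos.ne').comp_hasFDerivAt x hsq
  have hP : DifferentiableAt ℝ (fun y => G y * fderiv ℝ f y (1, 0) - F y * fderiv ℝ f y (0, 1))
      x := ((hG.differentiable (by simp) x).mul ((diff_pd hf (1, 0)) x)).sub
        ((hF.differentiable (by simp) x).mul ((diff_pd hf (0, 1)) x))
  have hQ : DifferentiableAt ℝ (fun y => E y * fderiv ℝ f y (0, 1) - F y * fderiv ℝ f y (1, 0))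
      x := ((hE.differentiable (by simp) x).mul ((diff_pd hf (0, 1)) x)).sub
        ((hF.differentiable (by simp) x).mul ((diff_pd hf (1, 0)) x))
  have h1 := hP.hasFDerivAt.mul hsqinv
  have h2 := hQ.hasFDerivAt.mul hsqinv
  simp only [laplaceBeltrami, pd1_eq, pd2_eq, div_eq_mul_inv]
  erw [h1.fderiv, h2.fderiv]
  simp only [ContinuousLinearMap.add_apply, ContinuousLinearMap.coe_smul', Pi.smul_apply,
    smul_eq_mul]
  rw [fd_mulsub hG hF hf x (1, 0) (0, 1) (1, 0), fd_mulsub hE hF hf x (0, 1) (1, 0) (0, 1),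
    fd_det hE hF hG x (1, 0), fd_det hE hF hG x (0, 1), fd_symm hf x (1, 0) (0, 1)]
  set s := Real.sqrt (E x * G x - F x ^ 2) with hsdef
  rw [show E x * G x - F x ^ 2 = s ^ 2 from (Real.sq_sqrt (hdet x).le).symm]
  field_simp
  ring

private lemma conf_fst {f E : ℝ × ℝ → ℝ} (hf : ContDiff ℝ (⊤ : ℕ∞) f) (hE : ContDiff ℝ (⊤ : ℕ∞) E)
    (x w : ℝ × ℝ) :
    fderiv ℝ (fun y => Real.exp (2 * f y) * E y) x w
      = Real.exp (2 * f x) * (2 * fderiv ℝ f x w * E x + fderiv ℝ E x w) := by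
  have h1 : HasFDerivAt (fun y => Real.exp (2 * f y))
      (Real.exp (2 * f x) • ((2 : ℝ) • fderiv ℝ f x)) x :=
    ((hf.differentiable (by simp) x).hasFDerivAt.const_mul (2 : ℝ)).exp
  have h2 := h1.mul (hE.differentiable (by simp) x).hasFDerivAt
  erw [h2.fderiv]
  simp only [ContinuousLinearMap.add_apply, ContinuousLinearMap.coe_smul', Pi.smul_apply,
    smul_eq_mul]
  ring

private lemma conf_snd {f E : ℝ × ℝ → ℝ} (hf : ContDiff ℝ (⊤ : ℕ∞) f) (hE : ContDiff ℝ (⊤ : ℕ∞) E)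
    (x w w' : ℝ × ℝ) :
    fderiv ℝ (fun y => Real.exp (2 * f y) * (2 * fderiv ℝ f y w * E y + fderiv ℝ E y w)) x w'
      = Real.exp (2 * f x) * (2 * fderiv ℝ f x w' * (2 * fderiv ℝ f x w * E x + fderiv ℝ E x w)
          + (2 * fderiv ℝ (fun y => fderiv ℝ f y w) x w' * E x
             + 2 * fderiv ℝ f x w * fderiv ℝ E x w'
             + fderiv ℝ (fun y => fderiv ℝ E y w) x w')) := by
  have hdf := ((diff_pd hf w) x).hasFDerivAt
  have hdE := ((diff_pd hE w) x).hasFDerivAt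
  have hEx := (hE.differentiable (by simp) x).hasFDerivAt
  have hfx := (hf.differentiable (by simp) x).hasFDerivAt
  have h1 : HasFDerivAt (fun y => Real.exp (2 * f y))
      (Real.exp (2 * f x) • ((2 : ℝ) • fderiv ℝ f x)) x := (hfx.const_mul (2 : ℝ)).exp
  have h2 := ((hdf.const_mul (2 : ℝ)).mul hEx).add hdE
  have h3 := h1.mul h2
  erw [h3.fderiv]
  simp only [ContinuousLinearMap.add_apply, ContinuousLinearMap.coe_smul', Pi.smul_apply,
    smul_eq_mul, Pi.add_apply, Pi.mul_apply]
  ring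

/-- Under a conformal change of metric `g ↦ e^{2f} g` on a
2-dimensional Riemannian manifold (here a coordinate patch with metric components
`(E, F, G)`), the scalar curvature transforms as
`S(e^{2f} g) = e^{−2f} (S(g) − 2 Δ^g f)`. -/
theorem scalar_curvature_conformal_change_dim_two
    (E F G f : ℝ × ℝ → ℝ)
    (hE : ContDiff ℝ (⊤ : ℕ∞) E) (hF : ContDiff ℝ (⊤ : ℕ∞) F) (hG : ContDiff ℝ (⊤ : ℕ∞) G)
    (hf : ContDiff ℝ (⊤ : ℕ∞) f)
    (hEpos : ∀ x, 0 < E x) (hdet : ∀ x, 0 < E x * G x - F x ^ 2)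
    (x : ℝ × ℝ) :
    scalarCurv (fun y => Real.exp (2 * f y) * E y)
        (fun y => Real.exp (2 * f y) * F y)
        (fun y => Real.exp (2 * f y) * G y) x =
      Real.exp (-(2 * f x)) * (scalarCurv E F G x - 2 * laplaceBeltrami E F G f x) := by
  rw [lap_eval hE hF hG hf hdet x]
  simp only [scalarCurv, brioschiGaussCurv]
  have hA : pd2 (fun y => Real.exp (2 * f y) * E y)
      = fun y => Real.exp (2 * f y) * (2 * pd2 f y * E y + pd2 E y) :=
    funext fun y => conf_fst hf hE y (0, 1)
  have hB : pd2 (fun y => Real.exp (2 * f y) * F y)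
      = fun y => Real.exp (2 * f y) * (2 * pd2 f y * F y + pd2 F y) :=
    funext fun y => conf_fst hf hF y (0, 1)
  have hC : pd1 (fun y => Real.exp (2 * f y) * G y)
      = fun y => Real.exp (2 * f y) * (2 * pd1 f y * G y + pd1 G y) :=
    funext fun y => conf_fst hf hG y (1, 0)
  have hE1 : pd1 (fun y => Real.exp (2 * f y) * E y) x
      = Real.exp (2 * f x) * (2 * pd1 f x * E x + pd1 E x) := conf_fst hf hE x (1, 0)
  have hF1 : pd1 (fun y => Real.exp (2 * f y) * F y) x
      = Real.exp (2 * f x) * (2 * pd1 f x * F x + pd1 F x) := conf_fst hf hF x (1, 0)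
  have hG2 : pd2 (fun y => Real.exp (2 * f y) * G y) x
      = Real.exp (2 * f x) * (2 * pd2 f x * G x + pd2 G x) := conf_fst hf hG x (0, 1)
  have hE22 : pd2 (fun y => Real.exp (2 * f y) * (2 * pd2 f y * E y + pd2 E y)) x
      = Real.exp (2 * f x) * (2 * pd2 f x * (2 * pd2 f x * E x + pd2 E x)
          + (2 * pd2 (pd2 f) x * E x + 2 * pd2 f x * pd2 E x + pd2 (pd2 E) x)) :=
    conf_snd hf hE x (0, 1) (0, 1)
  have hF12 : pd1 (fun y => Real.exp (2 * f y) * (2 * pd2 f y * F y + pd2 F y)) x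
      = Real.exp (2 * f x) * (2 * pd1 f x * (2 * pd2 f x * F x + pd2 F x)
          + (2 * pd1 (pd2 f) x * F x + 2 * pd2 f x * pd1 F x + pd1 (pd2 F) x)) :=
    conf_snd hf hF x (0, 1) (1, 0)
  have hG11 : pd1 (fun y => Real.exp (2 * f y) * (2 * pd1 f y * G y + pd1 G y)) x
      = Real.exp (2 * f x) * (2 * pd1 f x * (2 * pd1 f x * G x + pd1 G x)
          + (2 * pd1 (pd1 f) x * G x + 2 * pd1 f x * pd1 G x + pd1 (pd1 G) x)) :=
    conf_snd hf hG x (1, 0) (1, 0)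
  rw [hA, hB, hC]
  beta_reduce
  rw [hE22, hF12, hG11, hE1, hF1, hG2]
  simp only [Matrix.det_fin_three, Matrix.cons_val', Matrix.cons_val_zero, Matrix.cons_val_one,
    Matrix.head_cons, Matrix.empty_val', Matrix.cons_val_fin_one, Matrix.head_fin_const,
    Matrix.cons_val_two, Matrix.tail_cons, Matrix.of_apply]
  rw [Real.exp_neg]
  have hx2 : Real.exp (2 * f x) * E x * (Real.exp (2 * f x) * G x)
      - (Real.exp (2 * f x) * F x) ^ 2
      = Real.exp (2 * f x) ^ 2 * (E x * G x - F x ^ 2) := by ring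
  rw [hx2]
  have h1 : Real.exp (2 * f x) ≠ 0 := (Real.exp_pos _).ne'
  have h2 : E x * G x - F x ^ 2 ≠ 0 := (hdet x).ne'
  field_simp
  ring

end
end
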